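/- arXiv:1610.07582 — 3 statements merged into one kernel-verified Lean document; each statement's English description precedes it below -/
import Mathlib

section
/- Let λ* = (λ₁*,…,λ₆*) ∈ ℂ⁶ satisfy λ₁* = λ₄* = λ₅* = 0, λ₂* ≠ 0, and λ₃* ≠ λ₆* (i.e. λ* is a smooth point of the center set lying on I₃ only). Then the ideal of ℂ[λ₁,…,λ₆] generated by the Kapteyn–Bautin polynomials v₁, v₂, v₃, v₄ and the ideal generated by λ₁, λ₄, λ₅ coincide locally at λ*. -/
open MvPolynomial

/-- The multiplicative set of polynomials not vanishing at `p`, i.e. the complement of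
the maximal ideal of polynomials vanishing at `p`. -/
def nonVanishing (K : Type*) [Field K] (p : Fin 6 → K) :
    Submonoid (MvPolynomial (Fin 6) K) where
  carrier := {f | eval p f ≠ 0}
  mul_mem' := by
    intro a b ha hb
    simp only [Set.mem_setOf_eq, map_mul] at ha hb ⊢
    exact mul_ne_zero ha hb
  one_mem' := by simp

/-- Two ideals of `K[λ₁,…,λ₆]` coincide locally at `p` if their extensions to the
localization of the polynomial ring at the maximal ideal of polynomials vanishing at `p`
(equivalently, the localization inverting all polynomials not vanishing at `p`) are equal. -/
def coincideLocally (K : Type*) [Field K] (p : Fin 6 → K)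
    (I J : Ideal (MvPolynomial (Fin 6) K)) : Prop :=
  Ideal.map (algebraMap (MvPolynomial (Fin 6) K) (Localization (nonVanishing K p))) I =
  Ideal.map (algebraMap (MvPolynomial (Fin 6) K) (Localization (nonVanishing K p))) J

/-- The Bautin ideal of the Kapteyn normal form, generated by the Kapteyn–Bautin
polynomials `v₁ = λ₁`, `v₂ = λ₅(λ₃−λ₆)`, `v₃ = λ₂λ₄(λ₃−λ₆)(λ₄+5λ₃−5λ₆)`,
`v₄ = λ₂λ₄(λ₃−λ₆)²(λ₃λ₆−2λ₆²−λ₂²)`, where `X 0 = λ₁, …, X 5 = λ₆`. -/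
noncomputable def bautinIdeal (K : Type*) [Field K] : Ideal (MvPolynomial (Fin 6) K) :=
  Ideal.span {X 0, X 4 * (X 2 - X 5),
    X 1 * X 3 * (X 2 - X 5) * (X 3 + 5 * X 2 - 5 * X 5),
    X 1 * X 3 * (X 2 - X 5) ^ 2 * (X 2 * X 5 - 2 * X 5 ^ 2 - X 1 ^ 2)}

section

variable {K : Type*} [Field K]

@[simp]
lemma mem_nonVanishing {p : Fin 6 → K} {f : MvPolynomial (Fin 6) K} :
    f ∈ nonVanishing K p ↔ eval p f ≠ 0 :=
  Iff.rfl

lemma bautinIdeal_le_span_X : bautinIdeal K ≤ Ideal.span {X 0, X 3, X 4} := by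
  have hX0 : (X 0 : MvPolynomial (Fin 6) K) ∈ Ideal.span {X 0, X 3, X 4} :=
    Ideal.subset_span (by simp)
  have hX3 : (X 3 : MvPolynomial (Fin 6) K) ∈ Ideal.span {X 0, X 3, X 4} :=
    Ideal.subset_span (by simp)
  have hX4 : (X 4 : MvPolynomial (Fin 6) K) ∈ Ideal.span {X 0, X 3, X 4} :=
    Ideal.subset_span (by simp)
  rw [bautinIdeal, Ideal.span_le]
  rintro f (rfl | rfl | rfl | rfl)
  · exact hX0
  · exact Ideal.mul_mem_right _ _ hX4
  all_goals exact Ideal.mul_mem_right _ _ (Ideal.mul_mem_right _ _ (Ideal.mul_mem_left _ _ hX3))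

/-- Since `v₂ = λ₅ · (λ₃ − λ₆)` and `v₃ = λ₄ · λ₂(λ₃ − λ₆)(λ₄ + 5λ₃ − 5λ₆)`, at a point where
these cofactors do not vanish they are units of the local ring, so `λ₅` and `λ₄` lie in the
localized Bautin ideal. -/
theorem coincideLocally_bautinIdeal_span_X {p : Fin 6 → K} (h1 : p 1 ≠ 0)
    (h25 : p 2 - p 5 ≠ 0) (h325 : p 3 + 5 * (p 2 - p 5) ≠ 0) :
    coincideLocally K p (bautinIdeal K) (Ideal.span {X 0, X 3, X 4}) := by
  refine le_antisymm (Ideal.map_mono bautinIdeal_le_span_X) ?_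
  rw [Ideal.map_span, Ideal.span_le]
  rintro _ ⟨f, hf, rfl⟩
  rw [SetLike.mem_coe, IsLocalization.algebraMap_mem_map_algebraMap_iff (nonVanishing K p)]
  rcases hf with rfl | rfl | rfl
  · exact ⟨1, one_mem _, by rw [one_mul]; exact Ideal.subset_span (by simp)⟩
  · refine ⟨X 1 * (X 2 - X 5) * (X 3 + 5 * X 2 - 5 * X 5), ?_, Ideal.subset_span ?_⟩
    · simp only [mem_nonVanishing, map_mul, map_sub, map_add, eval_X, map_ofNat]
      refine mul_ne_zero (mul_ne_zero h1 h25) ?_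
      convert h325 using 1
      ring
    · simp only [Set.mem_insert_iff, Set.mem_singleton_iff]
      exact Or.inr (Or.inr (Or.inl (by ring)))
  · refine ⟨X 2 - X 5, ?_, Ideal.subset_span ?_⟩
    · simpa using h25
    · simp only [Set.mem_insert_iff, Set.mem_singleton_iff]
      exact Or.inr (Or.inl (by ring))

end

theorem stmt_6_general (l1 l2 l3 l4 l5 l6 : ℂ)
    (h4 : l4 = 0)
    (h2 : l2 ≠ 0) (h36 : l3 ≠ l6) :
    coincideLocally ℂ ![l1, l2, l3, l4, l5, l6]
      (bautinIdeal ℂ)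
      (Ideal.span {X 0, X 3, X 4}) := by
  have h36' : l3 - l6 ≠ 0 := sub_ne_zero.mpr h36
  refine coincideLocally_bautinIdeal_span_X h2 h36' ?_
  simpa [h4] using h36'

/-- at a smooth point `λ*` of the center set lying on `I₃` only
(`λ₁* = λ₄* = λ₅* = 0`, `λ₂* ≠ 0`, `λ₃* ≠ λ₆*`), the Bautin ideal coincides locally
at `λ*` with the ideal `(λ₁, λ₄, λ₅)`. -/
theorem stmt_6 (l1 l2 l3 l4 l5 l6 : ℂ)
    (h1 : l1 = 0) (h4 : l4 = 0) (h5 : l5 = 0)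
    (h2 : l2 ≠ 0) (h36 : l3 ≠ l6) :
    coincideLocally ℂ ![l1, l2, l3, l4, l5, l6]
      (bautinIdeal ℂ)
      (Ideal.span {X 0, X 3, X 4}) :=
  stmt_6_general l1 l2 l3 l4 l5 l6 h4 h2 h36
end

section
/- Let λ* = (λ₁*,…,λ₆*) ∈ ℝ⁶ satisfy λ₁* = λ₂* = λ₅* = 0, λ₃* = λ₆*, and λ₄* ≠ 0 (i.e. λ* is a smooth point of the intersection I₁ ∩ I₂, not on I₃). Then the ideal of ℝ[λ₁,…,λ₆] generated by the Kapteyn–Bautin polynomials v₁, v₂, v₃, v₄ and the ideal generated by λ₁, λ₅(λ₃−λ₆), λ₂(λ₃−λ₆) coincide locally at λ*. -/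
open MvPolynomial

/-!
`v₁` and `v₂` are among the generators `λ₁, λ₅(λ₃−λ₆), λ₂(λ₃−λ₆)`, and `v₃`, `v₄` are multiples
of `λ₂(λ₃−λ₆)`, so the Bautin ideal lies in the other ideal globally. Conversely
`v₃ = λ₂(λ₃−λ₆) · λ₄(λ₄+5λ₃−5λ₆)`, and the second factor equals `λ₄*² ≠ 0` at `λ*`, so it is a
unit in the local ring and `λ₂(λ₃−λ₆)` lies in the localized Bautin ideal.
-/

theorem IsLocalization.map_span_le_map_of_forall_exists_mul_mem {R S : Type*} [CommRing R]
    [CommRing S] [Algebra R S] (M : Submonoid R) [IsLocalization M S] {T : Set R}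
    {I : Ideal R} (h : ∀ t ∈ T, ∃ m ∈ M, m * t ∈ I) :
    (Ideal.span T).map (algebraMap R S) ≤ I.map (algebraMap R S) := by
  rw [Ideal.map_span, Ideal.span_le]
  rintro _ ⟨t, ht, rfl⟩
  exact (IsLocalization.algebraMap_mem_map_algebraMap_iff M S I t).2 (h t ht)

section

variable {K : Type*} [Field K]

theorem bautinIdeal_le_span :
    bautinIdeal K ≤ Ideal.span {X 0, X 4 * (X 2 - X 5), X 1 * (X 2 - X 5)} := by
  rw [bautinIdeal, Ideal.span_le]
  have hmul : ∀ f : MvPolynomial (Fin 6) K,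
      X 1 * (X 2 - X 5) * f ∈ Ideal.span {X 0, X 4 * (X 2 - X 5), X 1 * (X 2 - X 5)} :=
    fun f ↦ Ideal.mul_mem_right f _ (Ideal.subset_span (by simp))
  rintro _ (rfl | rfl | rfl | rfl)
  · exact Ideal.subset_span (by simp)
  · exact Ideal.subset_span (by simp)
  · rw [show (X 1 * X 3 * (X 2 - X 5) * (X 3 + 5 * X 2 - 5 * X 5) : MvPolynomial (Fin 6) K) =
      X 1 * (X 2 - X 5) * (X 3 * (X 3 + 5 * X 2 - 5 * X 5)) by ring]
    exact hmul _
  · rw [show (X 1 * X 3 * (X 2 - X 5) ^ 2 * (X 2 * X 5 - 2 * X 5 ^ 2 - X 1 ^ 2) :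
        MvPolynomial (Fin 6) K) =
      X 1 * (X 2 - X 5) * (X 3 * (X 2 - X 5) * (X 2 * X 5 - 2 * X 5 ^ 2 - X 1 ^ 2)) by ring]
    exact hmul _

theorem exists_nonVanishing_mul_mem_bautinIdeal {p : Fin 6 → K}
    (hp : p 3 * (p 3 + 5 * p 2 - 5 * p 5) ≠ 0) :
    ∀ t ∈ ({X 0, X 4 * (X 2 - X 5), X 1 * (X 2 - X 5)} : Set (MvPolynomial (Fin 6) K)),
      ∃ m ∈ nonVanishing K p, m * t ∈ bautinIdeal K := by
  rintro _ (rfl | rfl | rfl)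
  · exact ⟨1, one_mem _, by rw [one_mul]; exact Ideal.subset_span (by simp)⟩
  · exact ⟨1, one_mem _, by rw [one_mul]; exact Ideal.subset_span (by simp)⟩
  · refine ⟨X 3 * (X 3 + 5 * X 2 - 5 * X 5), by simpa [nonVanishing] using hp, ?_⟩
    have hv₃ : X 1 * X 3 * (X 2 - X 5) * (X 3 + 5 * X 2 - 5 * X 5) ∈ bautinIdeal K :=
      Ideal.subset_span (by simp)
    convert hv₃ using 1
    ring

end

theorem stmt_9_general (l1 l2 l3 l4 l5 l6 : ℝ)
    (h36 : l3 = l6) (h4 : l4 ≠ 0) :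
    coincideLocally ℝ ![l1, l2, l3, l4, l5, l6]
      (bautinIdeal ℝ)
      (Ideal.span {X 0, X 4 * (X 2 - X 5), X 1 * (X 2 - X 5)}) := by
  refine le_antisymm (Ideal.map_mono bautinIdeal_le_span)
    (IsLocalization.map_span_le_map_of_forall_exists_mul_mem
      (nonVanishing ℝ ![l1, l2, l3, l4, l5, l6]) (exists_nonVanishing_mul_mem_bautinIdeal ?_))
  simpa [h36] using h4

/-- at a smooth point `λ*` of `I₁ ∩ I₂` not on `I₃`
(`λ₁* = λ₂* = λ₅* = 0`, `λ₃* = λ₆*`, `λ₄* ≠ 0`, base field `ℝ`), the Bautin ideal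
coincides locally at `λ*` with the ideal `(λ₁, λ₅(λ₃−λ₆), λ₂(λ₃−λ₆))`. -/
theorem stmt_9 (l1 l2 l3 l4 l5 l6 : ℝ)
    (h1 : l1 = 0) (h2 : l2 = 0) (h5 : l5 = 0)
    (h36 : l3 = l6) (h4 : l4 ≠ 0) :
    coincideLocally ℝ ![l1, l2, l3, l4, l5, l6]
      (bautinIdeal ℝ)
      (Ideal.span {X 0, X 4 * (X 2 - X 5), X 1 * (X 2 - X 5)}) :=
  stmt_9_general l1 l2 l3 l4 l5 l6 h36 h4
end

section
/- Let λ* = (λ₁*,…,λ₆*) ∈ ℝ⁶ satisfy λ₁* = λ₂* = λ₄* = λ₅* = 0 and λ₃* ≠ λ₆* (i.e. λ* is a smooth point of the intersection I₂ ∩ I₃, not on I₁). Then the ideal of ℝ[λ₁,…,λ₆] generated by the Kapteyn–Bautin polynomials v₁, v₂, v₃, v₄ and the ideal generated by λ₁, λ₅, λ₂λ₄ coincide locally at λ*. -/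
open MvPolynomial

/-! At `λ*` the factors `λ₃ − λ₆` and `λ₄ + 5λ₃ − 5λ₆` do not vanish, so they become units in the
local ring. There `v₂` and `v₃` are associates of `λ₅` and `λ₂λ₄`, while `v₄` is a multiple of
`λ₂λ₄`. -/

theorem Ideal.span_four_eq_span_three {R : Type*} [CommRing R] {a b c u v s t : R}
    (hu : IsUnit u) (hv : IsUnit v) :
    Ideal.span {a, b * u, c * u * v, c * s * t} = Ideal.span {a, b, c} := by
  have hc : Ideal.span {c * u * v} = Ideal.span {c} := by
    rw [Ideal.span_singleton_mul_right_unit hv, Ideal.span_singleton_mul_right_unit hu]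
  have hcst : Ideal.span {c * s * t} ≤ Ideal.span {c} :=
    Ideal.span_singleton_le_span_singleton.mpr (Dvd.intro _ (mul_assoc c s t).symm)
  simp only [Ideal.span_insert, Ideal.span_singleton_mul_right_unit hu, hc, sup_of_le_left hcst]

theorem isUnit_algebraMap_nonVanishing {K : Type*} [Field K] {p : Fin 6 → K}
    {f : MvPolynomial (Fin 6) K} (hf : eval p f ≠ 0) :
    IsUnit (algebraMap _ (Localization (nonVanishing K p)) f) :=
  IsLocalization.map_units _ (⟨f, hf⟩ : nonVanishing K p)

/-- at a smooth point `λ*` of `I₂ ∩ I₃` not on `I₁`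
(`λ₁* = λ₂* = λ₄* = λ₅* = 0`, `λ₃* ≠ λ₆*`, base field `ℝ`), the Bautin ideal
coincides locally at `λ*` with the ideal `(λ₁, λ₅, λ₂λ₄)`. -/
theorem stmt_10 (l1 l2 l3 l4 l5 l6 : ℝ)
    (h1 : l1 = 0) (h2 : l2 = 0) (h4 : l4 = 0) (h5 : l5 = 0)
    (h36 : l3 ≠ l6) :
    coincideLocally ℝ ![l1, l2, l3, l4, l5, l6]
      (bautinIdeal ℝ)
      (Ideal.span {X 0, X 4, X 1 * X 3}) := by
  subst h1 h2 h4 h5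
  have hu := isUnit_algebraMap_nonVanishing (p := ![0, 0, l3, 0, 0, l6])
    (f := X 2 - X 5) (by simpa [sub_eq_zero] using h36)
  have hv := isUnit_algebraMap_nonVanishing (p := ![0, 0, l3, 0, 0, l6])
    (f := X 3 + 5 * X 2 - 5 * X 5) (by simpa [← mul_sub, sub_eq_zero] using h36)
  simp only [coincideLocally, bautinIdeal, Ideal.map_span, Set.image_insert_eq,
    Set.image_singleton, map_mul]
  exact Ideal.span_four_eq_span_three hu hv
end
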